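/- arXiv:2001.02468 — 4 statements merged into one kernel-verified Lean document; each statement's English description precedes it below -/
import Mathlib

section
/- Let F : ℝ → ℝ be C² and let u : ℝ → ℝ be a bounded C³ solution of u'' = F'(u). Set c_u := infimum over y ∈ ℝ of F(u(y)). Then for every x ∈ ℝ, (1/2)(u'(x))² ≤ F(u(x)) − c_u. -/
/-!
Multiplying `u'' = F'(u)` by `u'` shows that the energy `½ u'² - F ∘ u` is constant, say `e`.
Hence `F ∘ u ≥ -e`, and since a bounded function on `ℝ` has, by the mean value theorem, points where
its derivative is arbitrarily small, the infimum of `F ∘ u` is exactly `-e`.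
-/

open Set

theorem exists_abs_deriv_lt_of_abs_le {u : ℝ → ℝ} (hu : Differentiable ℝ u) {M : ℝ}
    (hM : ∀ x, |u x| ≤ M) {ε : ℝ} (hε : 0 < ε) : ∃ y, |deriv u y| < ε := by
  have hM0 : 0 ≤ M := (abs_nonneg _).trans (hM 0)
  set b := (2 * M + 1) / ε
  have hb : 0 < b := by positivity
  obtain ⟨c, -, hc⟩ := exists_deriv_eq_slope u hb hu.continuous.continuousOn
    (hu.differentiableOn.mono Ioo_subset_Icc_self)
  refine ⟨c, ?_⟩
  have hdiff : |u b - u 0| ≤ 2 * M := (abs_sub _ _).trans (by linarith [hM b, hM 0])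
  calc |deriv u c| = |u b - u 0| / b := by rw [hc, sub_zero, abs_div, abs_of_pos hb]
    _ ≤ 2 * M / b := by gcongr
    _ < ε := by
      rw [div_lt_iff₀ hb, mul_div_cancel₀ _ hε.ne']
      linarith

theorem energy_eq_of_deriv_deriv_eq {F u : ℝ → ℝ} (hF : Differentiable ℝ F)
    (hu : Differentiable ℝ u) (hu' : Differentiable ℝ (deriv u))
    (hode : ∀ x, deriv (deriv u) x = deriv F (u x)) (x y : ℝ) :
    1 / 2 * deriv u x ^ 2 - F (u x) = 1 / 2 * deriv u y ^ 2 - F (u y) := by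
  have hE : ∀ z, HasDerivAt (fun z => 1 / 2 * deriv u z ^ 2 - F (u z)) 0 z := by
    intro z
    have h2 : HasDerivAt (deriv u) (deriv F (u z)) z := hode z ▸ (hu' z).hasDerivAt
    exact (((h2.pow 2).const_mul (1 / 2)).sub
      ((hF (u z)).hasDerivAt.comp z (hu z).hasDerivAt)).congr_deriv (by push_cast; ring)
  exact is_const_of_deriv_eq_zero (fun z => (hE z).differentiableAt) (fun z => (hE z).deriv) x y

theorem stmt_2 (F u : ℝ → ℝ) (hF : ContDiff ℝ 2 F) (hu : ContDiff ℝ 3 u)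
    (hbdd : ∃ M : ℝ, ∀ x : ℝ, |u x| ≤ M)
    (hode : ∀ x : ℝ, deriv (deriv u) x = deriv F (u x)) :
    ∀ x : ℝ, (1/2) * (deriv u x)^2 ≤ F (u x) - ⨅ y : ℝ, F (u y) := by
  obtain ⟨M, hM⟩ := hbdd
  have hu1 : Differentiable ℝ u := hu.differentiable (by norm_num)
  have hu2 : Differentiable ℝ (deriv u) :=
    ((contDiff_succ_iff_deriv (n := 2)).mp hu).2.2.differentiable (by norm_num)
  have hE := energy_eq_of_deriv_deriv_eq (hF.differentiable (by norm_num)) hu1 hu2 hode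
  intro x
  have hlow : ∀ y, F (u x) - 1 / 2 * deriv u x ^ 2 ≤ F (u y) := fun y => by
    linarith [hE x y, sq_nonneg (deriv u y)]
  have hinf : ⨅ y, F (u y) ≤ F (u x) - 1 / 2 * deriv u x ^ 2 := by
    refine le_of_forall_pos_lt_add fun ε hε => ?_
    obtain ⟨y, hy⟩ :=
      exists_abs_deriv_lt_of_abs_le hu1 hM (Real.sqrt_pos.mpr (by positivity : 0 < 2 * ε))
    have hy2 : deriv u y ^ 2 < 2 * ε := by
      rwa [← sq_abs, ← Real.lt_sqrt (abs_nonneg _)]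
    calc ⨅ y, F (u y) ≤ F (u y) := ciInf_le ⟨_, forall_mem_range.mpr hlow⟩ y
      _ < F (u x) - 1 / 2 * deriv u x ^ 2 + ε := by linarith [hE x y]
  linarith
end

section
/- Let F : ℝ → ℝ be continuous and suppose α ∈ ℝ satisfies: there exist k ≥ 0 and δ > 0 such that F(s) − F(α) ≤ k(s−α)² whenever |s−α| < δ. Let u : ℝ → ℝ be C¹ with (1/2)(u'(x))² ≤ F(u(x)) − F(α) for all x, and suppose u(x₀) = α for some x₀. Then u(x) = α for all x with |x − x₀| chosen so that u stays in the δ-neighborhood; in fact, if |u(x) − α| < δ for all x in an interval I containing x₀, then u ≡ α on I. -/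
/-! Since `F` grows at most quadratically above `F α` near `α`, the gradient bound gives
`|u'| ≤ √(2k) |u - α|` wherever `u` stays `δ`-close to `α`. By Grönwall's inequality, run forward
and backward from `x₀`, the function `u - α`, which vanishes at `x₀`, vanishes on all of `I`. -/

open Set

section Gronwall

variable {E : Type*} [NormedAddCommGroup E] [NormedSpace ℝ E] {f : ℝ → E} {K a b : ℝ}

theorem eq_zero_on_Icc_of_norm_deriv_le_of_apply_left_eq_zero (hf : Differentiable ℝ f)
    (bound : ∀ x ∈ Icc a b, ‖deriv f x‖ ≤ K * ‖f x‖) (ha : f a = 0) :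
    ∀ x ∈ Icc a b, f x = 0 :=
  eq_zero_of_abs_deriv_le_mul_abs_self_of_eq_zero_right hf.continuous.continuousOn
    (fun x _ => (hf x).hasDerivAt.hasDerivWithinAt) ha
    (fun x hx => bound x (Ico_subset_Icc_self hx))

theorem eq_zero_on_Icc_of_norm_deriv_le_of_apply_right_eq_zero (hf : Differentiable ℝ f)
    (bound : ∀ x ∈ Icc a b, ‖deriv f x‖ ≤ K * ‖f x‖) (hb : f b = 0) :
    ∀ x ∈ Icc a b, f x = 0 := by
  have hf_neg : Differentiable ℝ fun t => f (-t) := hf.comp differentiable_neg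
  have bound_neg : ∀ t ∈ Icc (-b) (-a), ‖deriv (fun t => f (-t)) t‖ ≤ K * ‖f (-t)‖ := by
    intro t ht
    rw [deriv_comp_neg, norm_neg]
    exact bound (-t) ⟨by linarith [ht.2], by linarith [ht.1]⟩
  intro x hx
  simpa using eq_zero_on_Icc_of_norm_deriv_le_of_apply_left_eq_zero hf_neg bound_neg
    (by simpa using hb) (-x) ⟨by linarith [hx.2], by linarith [hx.1]⟩

theorem Set.OrdConnected.eq_zero_of_norm_deriv_le {s : Set ℝ} (hs : s.OrdConnected)
    (hf : Differentiable ℝ f) (bound : ∀ x ∈ s, ‖deriv f x‖ ≤ K * ‖f x‖) {x₀ : ℝ}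
    (hx₀ : x₀ ∈ s) (h₀ : f x₀ = 0) : ∀ x ∈ s, f x = 0 := by
  intro x hx
  rcases le_total x₀ x with hle | hle
  · exact eq_zero_on_Icc_of_norm_deriv_le_of_apply_left_eq_zero hf
      (fun y hy => bound y (hs.out hx₀ hx hy)) h₀ x (right_mem_Icc.2 hle)
  · exact eq_zero_on_Icc_of_norm_deriv_le_of_apply_right_eq_zero hf
      (fun y hy => bound y (hs.out hx hx₀ hy)) h₀ x (left_mem_Icc.2 hle)

end Gronwall

theorem abs_le_sqrt_two_mul_mul_abs_of_half_sq_le {a b k : ℝ} (h : 1 / 2 * a ^ 2 ≤ k * b ^ 2) :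
    |a| ≤ √(2 * k) * |b| := by
  rw [← Real.sqrt_sq_eq_abs, ← Real.sqrt_sq_eq_abs b, ← Real.sqrt_mul' _ (sq_nonneg b)]
  exact Real.sqrt_le_sqrt (by linarith)

theorem stmt_4_general (F : ℝ → ℝ) (α k δ : ℝ)
    (hquad : ∀ s : ℝ, |s - α| < δ → F s - F α ≤ k * (s - α)^2)
    (u : ℝ → ℝ) (hu : ContDiff ℝ 1 u)
    (hgrad : ∀ x : ℝ, (1/2) * (deriv u x)^2 ≤ F (u x) - F α)
    (I : Set ℝ) (hI : I.OrdConnected) (x₀ : ℝ) (hx₀ : x₀ ∈ I) (hu₀ : u x₀ = α)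
    (hclose : ∀ x ∈ I, |u x - α| < δ) :
    ∀ x ∈ I, u x = α := by
  have hdiff : Differentiable ℝ fun x => u x - α :=
    (hu.differentiable one_ne_zero).sub_const α
  have bound : ∀ x ∈ I, ‖deriv (fun x => u x - α) x‖ ≤ √(2 * k) * ‖u x - α‖ := by
    intro x hx
    rw [deriv_sub_const, Real.norm_eq_abs, Real.norm_eq_abs]
    exact abs_le_sqrt_two_mul_mul_abs_of_half_sq_le
      ((hgrad x).trans (hquad (u x) (hclose x hx)))
  intro x hx
  exact sub_eq_zero.1 (hI.eq_zero_of_norm_deriv_le hdiff bound hx₀ (sub_eq_zero.2 hu₀) x hx)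

theorem stmt_4 (F : ℝ → ℝ) (hF : Continuous F) (α k δ : ℝ) (hk : 0 ≤ k) (hδ : 0 < δ)
    (hquad : ∀ s : ℝ, |s - α| < δ → F s - F α ≤ k * (s - α)^2)
    (u : ℝ → ℝ) (hu : ContDiff ℝ 1 u)
    (hgrad : ∀ x : ℝ, (1/2) * (deriv u x)^2 ≤ F (u x) - F α)
    (I : Set ℝ) (hI : I.OrdConnected) (x₀ : ℝ) (hx₀ : x₀ ∈ I) (hu₀ : u x₀ = α)
    (hclose : ∀ x ∈ I, |u x - α| < δ) :
    ∀ x ∈ I, u x = α :=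
  stmt_4_general F α k δ hquad u hu hgrad I hI x₀ hx₀ hu₀ hclose
end

section
/- For m ≥ 3, let u(x) = (√(m(m−2))/(1+|x|²))^((m−2)/2) on ℝ^m, let p = (m+2)/(m−2), F(t) = −|t|^(p+1)/(p+1), and c = F(u(0)). Then (1/2)|∇u(x)|² < F(u(x)) − c for all x ∈ ℝ^m with x ≠ 0, and (1/2)|∇u(0)|² = F(u(0)) − c. -/
open Real

lemma aux_grad (m : ℕ) (hm : 3 ≤ m) (x : EuclideanSpace ℝ (Fin m)) :
    HasGradientAt (fun x : EuclideanSpace ℝ (Fin m) =>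
        (Real.sqrt ((m : ℝ) * ((m : ℝ) - 2)) / (1 + ‖x‖^2)) ^ (((m : ℝ) - 2)/2))
      ((-(((m:ℝ)-2) * (Real.sqrt ((m : ℝ) * ((m : ℝ) - 2)) / (1 + ‖x‖^2))
          ^ (((m : ℝ) - 2)/2) / (1 + ‖x‖^2))) • x) x := by
  have hm' : (3:ℝ) ≤ (m:ℝ) := by exact_mod_cast hm
  set A := Real.sqrt ((m:ℝ) * ((m:ℝ)-2)) with hA
  have hApos : 0 < A := Real.sqrt_pos.2 (by nlinarith)
  set q : ℝ := ((m:ℝ)-2)/2 with hq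
  set s₀ : ℝ := ‖x‖^2 with hs₀
  have hs₀0 : 0 ≤ s₀ := by positivity
  have ht : (0:ℝ) < 1 + s₀ := by positivity
  have hbpos : 0 < A / (1 + s₀) := by positivity
  -- derivative of s ↦ A/(1+s)
  have h1 : HasDerivAt (fun s : ℝ => 1 + s) 1 s₀ := by
    simpa using (hasDerivAt_id s₀).const_add 1
  have h2 : HasDerivAt (fun s : ℝ => A / (1 + s)) (-A / (1+s₀)^2) s₀ := by
    have := (h1.inv ht.ne').const_mul A
    simpa [div_eq_mul_inv, mul_comm, mul_div_assoc, neg_div] using this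
  have h3 : HasDerivAt (fun s : ℝ => (A/(1+s)) ^ q)
      (q * (A/(1+s₀))^(q-1) * (-A/(1+s₀)^2)) s₀ := by
    exact (Real.hasDerivAt_rpow_const (Or.inl hbpos.ne')).comp s₀ h2
  have h4 : HasFDerivAt (fun y : EuclideanSpace ℝ (Fin m) => ‖y‖^2)
      (2 • innerSL ℝ x) x := (hasStrictFDerivAt_norm_sq x).hasFDerivAt
  have h5 := h3.comp_hasFDerivAt x h4
  rw [hasGradientAt_iff_hasFDerivAt]
  convert h5 using 1
  · rfl
  · rfl
  ext y
  have hb1 : (A/(1+s₀))^q = (A/(1+s₀))^(q-1) * (A/(1+s₀)) := by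
    rw [← Real.rpow_add_one hbpos.ne']; ring_nf
  simp only [InnerProductSpace.toDual_apply_apply, ContinuousLinearMap.smul_apply,
    ContinuousLinearMap.comp_apply, innerSL_apply_apply, smul_eq_mul]
  rw [real_inner_smul_left]
  rw [hb1]
  push_cast
  field_simp
  ring

theorem stmt_7 (m : ℕ) (hm : 3 ≤ m)
    (u : EuclideanSpace ℝ (Fin m) → ℝ)
    (hu : u = fun x => (Real.sqrt ((m : ℝ) * ((m : ℝ) - 2)) / (1 + ‖x‖^2))
      ^ (((m : ℝ) - 2)/2))
    (p : ℝ) (hp : p = ((m : ℝ) + 2)/((m : ℝ) - 2))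
    (F : ℝ → ℝ) (hF : F = fun t => -(|t| ^ (p + 1)) / (p + 1))
    (c : ℝ) (hc : c = F (u 0)) :
    ((1/2) * ‖gradient u 0‖^2 = F (u 0) - c) ∧
    (∀ x : EuclideanSpace ℝ (Fin m), x ≠ 0 →
      (1/2) * ‖gradient u x‖^2 < F (u x) - c) := by
  have hm' : (3:ℝ) ≤ (m:ℝ) := by exact_mod_cast hm
  have hm2 : (m:ℝ) - 2 ≠ 0 := by linarith
  set A := Real.sqrt ((m:ℝ) * ((m:ℝ)-2)) with hA
  have hApos : 0 < A := Real.sqrt_pos.2 (by nlinarith)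
  have hA2 : A^2 = (m:ℝ) * ((m:ℝ)-2) := Real.sq_sqrt (by nlinarith)
  set q : ℝ := ((m:ℝ)-2)/2 with hq
  have hp1 : p + 1 = 2*(m:ℝ)/((m:ℝ)-2) := by rw [hp]; field_simp; ring
  have hm2' : (0:ℝ) < (m:ℝ) - 2 := by linarith
  have hp1pos : 0 < p + 1 := by rw [hp1]; positivity
  have hqp : q * (p+1) = (m:ℝ) := by rw [hp1, hq]; field_simp
  constructor
  · have hg : gradient u 0 = 0 := by
      rw [hu]
      rw [(aux_grad m hm 0).gradient]
      simp
    rw [hg, hc]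
    simp
  · intro x hx
    have hr : 0 < ‖x‖ := norm_pos_iff.2 hx
    set r : ℝ := ‖x‖ with hrdef
    set t : ℝ := 1 + r^2 with htdef
    have ht1 : (1:ℝ) < t := by nlinarith
    have htpos : (0:ℝ) < t := by linarith
    have hbpos : 0 < A / t := by positivity
    set b : ℝ := A / t with hbdef
    -- gradient value
    have hg : gradient u x = (-(((m:ℝ)-2) * b ^ q / t)) • x := by
      rw [hu]; exact (aux_grad m hm x).gradient
    -- u values
    have hux : u x = b ^ q := by rw [hu]
    have hu0 : u 0 = A ^ q := by rw [hu]; simp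
    -- rpow facts
    have hbq_pos : 0 < b ^ q := Real.rpow_pos_of_pos hbpos q
    have hAq_pos : 0 < A ^ q := Real.rpow_pos_of_pos hApos q
    set B : ℝ := b ^ (m:ℝ) with hB
    have hBpos : 0 < B := Real.rpow_pos_of_pos hbpos _
    have hbqp : (b ^ q) ^ (p+1) = B := by
      rw [hB, ← Real.rpow_mul hbpos.le, hqp]
    have hAqp : (A ^ q) ^ (p+1) = B * t ^ (m:ℕ) := by
      rw [← Real.rpow_mul hApos.le, hqp]
      have hAbt : A = b * t := by rw [hbdef]; field_simp
      rw [hAbt, Real.mul_rpow hbpos.le htpos.le, hB, Real.rpow_natCast t m]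
    -- b^(2q) = B * t^2 / A^2
    have hb2q : (b ^ q) ^ 2 = B * t^2 / A^2 := by
      have h1 : (b ^ q) ^ 2 = b ^ ((m:ℝ) - 2) := by
        rw [← Real.rpow_natCast (b ^ q) 2, ← Real.rpow_mul hbpos.le]
        congr 1
        rw [hq]; push_cast; ring
      have hb2 : b ^ (2:ℝ) = A^2/t^2 := by
        rw [show (2:ℝ) = ((2:ℕ):ℝ) by norm_num, Real.rpow_natCast, hbdef, div_pow]
      rw [h1, Real.rpow_sub hbpos, hb2, hB]
      rw [div_div_eq_mul_div]
    -- F values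
    rw [hg, hF, hc, hF, hux, hu0]
    simp only
    rw [abs_of_pos hbq_pos, abs_of_pos hAq_pos, hbqp, hAqp]
    rw [norm_smul]
    have hnx : ‖x‖ = r := rfl
    rw [hnx, Real.norm_eq_abs]
    have hcoef : |(-(((m:ℝ)-2) * b ^ q / t))| = ((m:ℝ)-2) * b ^ q / t := by
      rw [abs_neg, abs_of_pos]
      have : (0:ℝ) < (m:ℝ)-2 := by linarith
      positivity
    rw [hcoef]
    clear_value A q r t b B
    have key : r^2 < t^(m:ℕ) - 1 := by
      have h2 : t^2 ≤ t^(m:ℕ) := pow_le_pow_right₀ ht1.le (by omega)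
      nlinarith
    have expand : (((m:ℝ)-2) * b ^ q / t * r)^2 = ((m:ℝ)-2)^2 * (B * t^2/A^2) * r^2 / t^2 := by
      rw [mul_pow (((m:ℝ)-2) * b ^ q / t) r, div_pow, mul_pow, hb2q]; ring
    rw [expand, hA2]
    have hmpos : (0:ℝ) < (m:ℝ) := by linarith
    have hL : (1:ℝ)/2 * (((m:ℝ)-2)^2 * (B*t^2/((m:ℝ)*((m:ℝ)-2))) * r^2 / t^2)
        = ((m:ℝ)-2)/(2*(m:ℝ)) * (B * r^2) := by
      field_simp
    have hR : -B/(p+1) - -(B*t^(m:ℕ))/(p+1)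
        = ((m:ℝ)-2)/(2*(m:ℝ)) * (B*(t^(m:ℕ) - 1)) := by
      have h0 : -B/(p+1) - -(B*t^(m:ℕ))/(p+1) = (B*t^(m:ℕ) - B)/(p+1) := by ring
      rw [h0, hp1, div_div_eq_mul_div]
      field_simp
    rw [hL, hR]
    have hcpos : (0:ℝ) < ((m:ℝ)-2)/(2*(m:ℝ)) := by positivity
    exact mul_lt_mul_of_pos_left (mul_lt_mul_of_pos_left (by linarith [key]) hBpos) hcpos
end

section
/- Let F : ℝ → ℝ be C² with F ≥ 0 everywhere, and let u : ℝ → ℝ be a bounded C³ solution of u'' = F'(u) such that (1/2)(u'(x₀))² = F(u(x₀)) at some point x₀ with u'(x₀) ≠ 0. Then u'(x) ≠ 0 for all x ∈ ℝ; in particular u is strictly monotone. -/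
/-!
Along a solution of u'' = F'(u) the energy (u')²/2 − F(u) is constant, and equality at x₀ makes
it zero. At a zero x₁ of u' we would get F(u x₁) = 0, a minimum of F, hence F'(u x₁) = 0 as well:
the phase point (u, u')(x₁) is an equilibrium of p' = q, q' = F'(p), whose vector field is locally
Lipschitz because F is C². By uniqueness for this system u' vanishes identically, contradicting
u'(x₀) ≠ 0. A function with nowhere vanishing derivative is injective by Rolle's theorem, hence
strictly monotone.
-/

open Set

theorem IsIntegralCurve.eq_of_locallyLipschitz {E : Type*} [NormedAddCommGroup E]
    [NormedSpace ℝ E] {V : E → E} (hV : LocallyLipschitz V) {γ γ' : ℝ → E} {t₀ : ℝ}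
    (hγ : IsIntegralCurve γ fun _ ↦ V) (hγ' : IsIntegralCurve γ' fun _ ↦ V)
    (h : γ t₀ = γ' t₀) : γ = γ' := by
  ext1 t
  obtain ⟨a, b, ht, ht₀⟩ : ∃ a b, t ∈ Ioo a b ∧ t₀ ∈ Ioo a b :=
    ⟨min t t₀ - 1, max t t₀ + 1, by grind, by grind⟩
  -- both curves stay in the compact set `S`, on which `V` is Lipschitz
  set S := γ '' Icc a b ∪ γ' '' Icc a b
  have hS : IsCompact S :=
    (isCompact_Icc.image hγ.continuous).union (isCompact_Icc.image hγ'.continuous)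
  obtain ⟨K, hK⟩ := (hV.locallyLipschitzOn (s := S)).exists_lipschitzOnWith_of_compact hS
  exact ODE_solution_unique_of_mem_Ioo (s := fun _ ↦ S) (fun _ _ ↦ hK) ht₀
    (fun s hs ↦ ⟨hγ s, .inl ⟨s, Ioo_subset_Icc_self hs, rfl⟩⟩)
    (fun s hs ↦ ⟨hγ' s, .inr ⟨s, Ioo_subset_Icc_self hs, rfl⟩⟩) h ht

theorem strictMono_or_strictAnti_of_deriv_ne_zero {f : ℝ → ℝ} (hf : Differentiable ℝ f)
    (hf' : ∀ x, deriv f x ≠ 0) : StrictMono f ∨ StrictAnti f := by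
  refine hf.continuous.strictMono_of_inj fun a b hab ↦ ?_
  by_contra hne
  rcases lt_or_gt_of_ne hne with h | h
  · obtain ⟨c, -, hc⟩ := exists_deriv_eq_zero h hf.continuous.continuousOn hab
    exact hf' c hc
  · obtain ⟨c, -, hc⟩ := exists_deriv_eq_zero h hf.continuous.continuousOn hab.symm
    exact hf' c hc

section Newton

variable {f u v : ℝ → ℝ}

theorem isIntegralCurve_newton (hu : ∀ x, HasDerivAt u (v x) x)
    (hv : ∀ x, HasDerivAt v (f (u x)) x) :
    IsIntegralCurve (fun x ↦ (u x, v x)) fun _ p ↦ (p.2, f p.1) :=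
  fun x ↦ (hu x).prodMk (hv x)

theorem newton_energy_eq {F : ℝ → ℝ} (hF : ∀ y, HasDerivAt F (f y) y)
    (hu : ∀ x, HasDerivAt u (v x) x) (hv : ∀ x, HasDerivAt v (f (u x)) x) (x y : ℝ) :
    v x ^ 2 / 2 - F (u x) = v y ^ 2 / 2 - F (u y) := by
  have hE : ∀ x, HasDerivAt (fun x ↦ v x ^ 2 / 2 - F (u x)) 0 x := fun x ↦
    ((((hv x).pow 2).div_const 2).sub ((hF (u x)).comp x (hu x))).congr_deriv (by ring)
  exact is_const_of_deriv_eq_zero (fun x ↦ (hE x).differentiableAt) (fun x ↦ (hE x).deriv) x y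

theorem newton_eq_zero_of_equilibrium (hf : LocallyLipschitz f)
    (hu : ∀ x, HasDerivAt u (v x) x) (hv : ∀ x, HasDerivAt v (f (u x)) x) {x₁ : ℝ}
    (hv₁ : v x₁ = 0) (hf₁ : f (u x₁) = 0) : v = 0 := by
  have hV : LocallyLipschitz fun p : ℝ × ℝ ↦ (p.2, f p.1) :=
    LipschitzWith.prod_snd.locallyLipschitz.prodMk
      (hf.comp LipschitzWith.prod_fst.locallyLipschitz)
  have hconst : IsIntegralCurve (fun _ ↦ (u x₁, (0 : ℝ))) fun _ p ↦ (p.2, f p.1) :=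
    fun x ↦ by
      show HasDerivAt _ ((0 : ℝ), f (u x₁)) x
      rw [hf₁]
      exact hasDerivAt_const x _
  have hphase := (isIntegralCurve_newton hu hv).eq_of_locallyLipschitz hV hconst
    (t₀ := x₁) (by rw [hv₁])
  funext x
  exact congrArg Prod.snd (congrFun hphase x)

end Newton

theorem stmt_10_general (F u : ℝ → ℝ) (hF : ContDiff ℝ 2 F) (hFpos : ∀ t : ℝ, 0 ≤ F t)
    (hu : ContDiff ℝ 3 u)
    (hode : ∀ x : ℝ, deriv (deriv u) x = deriv F (u x))
    (x₀ : ℝ) (heq : (1/2) * (deriv u x₀)^2 = F (u x₀)) (hne : deriv u x₀ ≠ 0) :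
    (∀ x : ℝ, deriv u x ≠ 0) ∧ (StrictMono u ∨ StrictAnti u) := by
  have hu_diff : Differentiable ℝ u := hu.differentiable (by norm_num)
  have hu' : ∀ x, HasDerivAt u (deriv u x) x := fun x ↦ (hu_diff x).hasDerivAt
  have hu'' : ∀ x, HasDerivAt (deriv u) (deriv F (u x)) x := fun x ↦
    hode x ▸ ((hu.of_le (by norm_num)).differentiable_deriv_two x).hasDerivAt
  have hF' : ∀ y, HasDerivAt F (deriv F y) y := fun y ↦
    (hF.differentiable (by norm_num) y).hasDerivAt
  have hnz : ∀ x, deriv u x ≠ 0 := by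
    intro x₁ hx₁
    have hFu₁ : F (u x₁) = 0 := by
      have henergy := newton_energy_eq hF' hu' hu'' x₁ x₀
      rw [hx₁] at henergy
      linarith
    have hmin : IsLocalMin F (u x₁) := .of_forall fun t ↦ hFu₁ ▸ hFpos t
    have hu'_zero := newton_eq_zero_of_equilibrium
      (ContDiff.deriv' (n := 1) hF).locallyLipschitz hu' hu'' hx₁ hmin.deriv_eq_zero
    exact hne (congrFun hu'_zero x₀)
  exact ⟨hnz, strictMono_or_strictAnti_of_deriv_ne_zero hu_diff hnz⟩

theorem stmt_10 (F u : ℝ → ℝ) (hF : ContDiff ℝ 2 F) (hFpos : ∀ t : ℝ, 0 ≤ F t)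
    (hu : ContDiff ℝ 3 u) (hbdd : ∃ M : ℝ, ∀ x : ℝ, |u x| ≤ M)
    (hode : ∀ x : ℝ, deriv (deriv u) x = deriv F (u x))
    (x₀ : ℝ) (heq : (1/2) * (deriv u x₀)^2 = F (u x₀)) (hne : deriv u x₀ ≠ 0) :
    (∀ x : ℝ, deriv u x ≠ 0) ∧ (StrictMono u ∨ StrictAnti u) :=
  stmt_10_general F u hF hFpos hu hode x₀ heq hne
end
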